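/- arXiv:2503.00798 — 5 statements merged into one kernel-verified Lean document; each statement's English description precedes it below -/
import Mathlib

section
/- Let G be a connected graph and r a vertex of G. Define the layering tree T(G,r) whose vertices are the maximal clusters with respect to r, where two clusters are adjacent if G has an edge between them. Then T(G,r) is a tree. -/
/-!
Every vertex `v` lies in exactly one cluster, and an edge of `G` either stays inside a cluster or
joins clusters on consecutive levels, so the layering tree is a quotient of `G` and is connected.
A cluster `S` on level `k + 1` has at most one neighbouring cluster on level `k`: two such
neighbours are joined by a path through `S`, which avoids the ball of radius `k - 1`, so they
coincide by maximality. On a cycle of clusters, the one of maximal level would have two distinct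
lower neighbours, which is impossible.
-/

open SimpleGraph

namespace Paper

variable {V : Type}

/-- `u` and `v` are connected in `G` after deleting the vertex set `B`. -/
def ConnOutside (G : SimpleGraph V) (B : Set V) (u v : V) : Prop :=
  ∃ (hu : u ∈ Bᶜ) (hv : v ∈ Bᶜ), (G.induce Bᶜ).Reachable ⟨u, hu⟩ ⟨v, hv⟩

/-- `C` is an `(a,b)`-cutset of `G`. -/
def IsSep (G : SimpleGraph V) (a b : V) (C : Set V) : Prop :=
  a ∉ C ∧ b ∉ C ∧ ¬ ConnOutside G C a b

/-- `C` is a minimal `(a,b)`-cutset of `G`. -/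
def IsMinSep (G : SimpleGraph V) (a b : V) (C : Set V) : Prop :=
  IsSep G a b C ∧ ∀ C' ⊂ C, ¬ IsSep G a b C'

/-- `S` is a cluster of the layering partition of `G` rooted at `r`, at level `k`:
a maximal set of vertices at distance exactly `k` from `r`, any two of which are
connected in `G` minus the ball of radius `k-1` around `r`. -/
def IsCluster (G : SimpleGraph V) (r : V) (k : ℕ) (S : Set V) : Prop :=
  S.Nonempty ∧ (∀ v ∈ S, G.dist r v = k) ∧
  (∀ u ∈ S, ∀ v ∈ S, ConnOutside G {w | G.dist r w < k} u v) ∧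
  ∀ S', S ⊆ S' → (∀ v ∈ S', G.dist r v = k) →
    (∀ u ∈ S', ∀ v ∈ S', ConnOutside G {w | G.dist r w < k} u v) → S' ⊆ S

/-- The parent set of a cluster `S` at level `k`: vertices at distance `k-1` from `r`
adjacent to some vertex of `S`. -/
def parentSet (G : SimpleGraph V) (r : V) (k : ℕ) (S : Set V) : Set V :=
  {v | G.dist r v = k - 1 ∧ ∃ u ∈ S, G.Adj v u}

/-- `G` has no `K_{2,3}` induced minor. -/
def K23Free (G : SimpleGraph V) : Prop :=
  ¬ ∃ φ : Fin 2 ⊕ Fin 3 → Set V,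
      (∀ w, (φ w).Nonempty) ∧ (∀ w, (G.induce (φ w)).Connected) ∧
      (Pairwise fun a b => Disjoint (φ a) (φ b)) ∧
      (∀ a b, a ≠ b →
        ((completeBipartiteGraph (Fin 2) (Fin 3)).Adj a b ↔
          ∃ u ∈ φ a, ∃ v ∈ φ b, G.Adj u v))

/-- `G` contains a theta as an induced subgraph. -/
def HasTheta (G : SimpleGraph V) : Prop :=
  ∃ (a b : V) (p₁ p₂ p₃ : G.Walk a b),
    p₁.IsPath ∧ p₂.IsPath ∧ p₃.IsPath ∧
    2 ≤ p₁.length ∧ 2 ≤ p₂.length ∧ 2 ≤ p₃.length ∧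
    (∀ v, v ∈ p₁.support → v ∈ p₂.support → v = a ∨ v = b) ∧
    (∀ v, v ∈ p₁.support → v ∈ p₃.support → v = a ∨ v = b) ∧
    (∀ v, v ∈ p₂.support → v ∈ p₃.support → v = a ∨ v = b) ∧
    ∀ u v, u ∈ p₁.support ++ p₂.support ++ p₃.support →
      v ∈ p₁.support ++ p₂.support ++ p₃.support →
      (G.Adj u v ↔ s(u, v) ∈ p₁.edges ++ p₂.edges ++ p₃.edges)

/-- `G` contains a pyramid as an induced subgraph. -/
def HasPyramid (G : SimpleGraph V) : Prop :=
  ∃ (a b₁ b₂ b₃ : V) (p₁ : G.Walk a b₁) (p₂ : G.Walk a b₂) (p₃ : G.Walk a b₃),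
    p₁.IsPath ∧ p₂.IsPath ∧ p₃.IsPath ∧
    G.Adj b₁ b₂ ∧ G.Adj b₂ b₃ ∧ G.Adj b₁ b₃ ∧
    1 ≤ p₁.length ∧ 1 ≤ p₂.length ∧ 1 ≤ p₃.length ∧
    ((2 ≤ p₁.length ∧ 2 ≤ p₂.length) ∨ (2 ≤ p₁.length ∧ 2 ≤ p₃.length) ∨
      (2 ≤ p₂.length ∧ 2 ≤ p₃.length)) ∧
    (∀ v, v ∈ p₁.support → v ∈ p₂.support → v = a) ∧
    (∀ v, v ∈ p₁.support → v ∈ p₃.support → v = a) ∧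
    (∀ v, v ∈ p₂.support → v ∈ p₃.support → v = a) ∧
    ∀ u v, u ∈ p₁.support ++ p₂.support ++ p₃.support →
      v ∈ p₁.support ++ p₂.support ++ p₃.support →
      (G.Adj u v ↔ s(u, v) ∈ p₁.edges ++ p₂.edges ++ p₃.edges ∨
        s(u, v) ∈ [s(b₁, b₂), s(b₂, b₃), s(b₁, b₃)])

/-- The common part of the definition of an (induced) prism in `G`. -/
def PrismWitness (G : SimpleGraph V) (a₁ a₂ a₃ b₁ b₂ b₃ : V)
    (p₁ : G.Walk a₁ b₁) (p₂ : G.Walk a₂ b₂) (p₃ : G.Walk a₃ b₃) : Prop :=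
  p₁.IsPath ∧ p₂.IsPath ∧ p₃.IsPath ∧
  G.Adj a₁ a₂ ∧ G.Adj a₂ a₃ ∧ G.Adj a₁ a₃ ∧
  G.Adj b₁ b₂ ∧ G.Adj b₂ b₃ ∧ G.Adj b₁ b₃ ∧
  (∀ v, v ∈ p₁.support → v ∉ p₂.support) ∧
  (∀ v, v ∈ p₁.support → v ∉ p₃.support) ∧
  (∀ v, v ∈ p₂.support → v ∉ p₃.support) ∧
  ∀ u v, u ∈ p₁.support ++ p₂.support ++ p₃.support →
    v ∈ p₁.support ++ p₂.support ++ p₃.support →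
    (G.Adj u v ↔ s(u, v) ∈ p₁.edges ++ p₂.edges ++ p₃.edges ∨
      s(u, v) ∈ [s(a₁, a₂), s(a₂, a₃), s(a₁, a₃), s(b₁, b₂), s(b₂, b₃), s(b₁, b₃)])

/-- `G` contains a prism as an induced subgraph. -/
def HasPrism (G : SimpleGraph V) : Prop :=
  ∃ (a₁ a₂ a₃ b₁ b₂ b₃ : V) (p₁ : G.Walk a₁ b₁) (p₂ : G.Walk a₂ b₂) (p₃ : G.Walk a₃ b₃),
    PrismWitness G a₁ a₂ a₃ b₁ b₂ b₃ p₁ p₂ p₃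

/-- `G` contains a long prism (at least one path of length ≥ 2) as an induced subgraph. -/
def HasLongPrism (G : SimpleGraph V) : Prop :=
  ∃ (a₁ a₂ a₃ b₁ b₂ b₃ : V) (p₁ : G.Walk a₁ b₁) (p₂ : G.Walk a₂ b₂) (p₃ : G.Walk a₃ b₃),
    PrismWitness G a₁ a₂ a₃ b₁ b₂ b₃ p₁ p₂ p₃ ∧
    (2 ≤ p₁.length ∨ 2 ≤ p₂.length ∨ 2 ≤ p₃.length)

/-- `c` is an induced cycle (hole when length ≥ 4) of `G`. -/
def IsInducedCycle (G : SimpleGraph V) {v : V} (c : G.Walk v v) : Prop :=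
  c.IsCycle ∧ ∀ x ∈ c.support, ∀ y ∈ c.support, (G.Adj x y ↔ s(x, y) ∈ c.edges)

/-- `p` is an induced path of `G`. -/
def IsInducedPath (G : SimpleGraph V) {a b : V} (p : G.Walk a b) : Prop :=
  p.IsPath ∧ ∀ u ∈ p.support, ∀ v ∈ p.support, (G.Adj u v ↔ s(u, v) ∈ p.edges)

/-- `G` contains a wheel: a hole together with a vertex having ≥ 3 neighbours on it. -/
def HasWheel (G : SimpleGraph V) : Prop :=
  ∃ (v x : V) (c : G.Walk v v), IsInducedCycle G c ∧ 4 ≤ c.length ∧ x ∉ c.support ∧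
    ∃ y₁ y₂ y₃, y₁ ≠ y₂ ∧ y₁ ≠ y₃ ∧ y₂ ≠ y₃ ∧
      y₁ ∈ c.support ∧ y₂ ∈ c.support ∧ y₃ ∈ c.support ∧
      G.Adj x y₁ ∧ G.Adj x y₂ ∧ G.Adj x y₃

/-- A sector of a wheel with rim `c` and centre `x`: a path contained in the rim whose
end-vertices are neighbours of `x` and whose internal vertices are not. -/
def IsSector (G : SimpleGraph V) {v : V} (c : G.Walk v v) (x : V) {s t : V}
    (q : G.Walk s t) : Prop :=
  q.IsPath ∧ (∀ e ∈ q.edges, e ∈ c.edges) ∧ G.Adj x s ∧ G.Adj x t ∧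
  ∀ w ∈ q.support, w ≠ s → w ≠ t → ¬ G.Adj x w

/-- `G` contains a broken wheel: a wheel with at least two sectors of length ≥ 2. -/
def HasBrokenWheel (G : SimpleGraph V) : Prop :=
  ∃ (v x : V) (c : G.Walk v v), IsInducedCycle G c ∧ 4 ≤ c.length ∧ x ∉ c.support ∧
    (∃ y₁ y₂ y₃, y₁ ≠ y₂ ∧ y₁ ≠ y₃ ∧ y₂ ≠ y₃ ∧
      y₁ ∈ c.support ∧ y₂ ∈ c.support ∧ y₃ ∈ c.support ∧
      G.Adj x y₁ ∧ G.Adj x y₂ ∧ G.Adj x y₃) ∧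
    ∃ (s₁ t₁ s₂ t₂ : V) (q₁ : G.Walk s₁ t₁) (q₂ : G.Walk s₂ t₂),
      IsSector G c x q₁ ∧ IsSector G c x q₂ ∧ 2 ≤ q₁.length ∧ 2 ≤ q₂.length ∧
      ∀ w, w ∈ q₁.support → w ∈ q₂.support → G.Adj x w

/-- A universally signable graph: no theta, pyramid, prism, or wheel induced subgraph. -/
def UniversallySignable (G : SimpleGraph V) : Prop :=
  ¬ HasTheta G ∧ ¬ HasPyramid G ∧ ¬ HasPrism G ∧ ¬ HasWheel G

/-- `G` has tree-width at most `w`. -/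
def TreewidthLe (G : SimpleGraph V) (w : ℕ) : Prop :=
  ∃ (ι : Type) (T : SimpleGraph ι) (bag : ι → Set V),
    T.IsTree ∧
    (∀ v, ∃ i, v ∈ bag i) ∧
    (∀ u v, G.Adj u v → ∃ i, u ∈ bag i ∧ v ∈ bag i) ∧
    (∀ v, (T.induce {i | v ∈ bag i}).Connected) ∧
    (∀ i, (bag i).ncard ≤ w + 1)

/-- The strong isometric path complexity of `G` is at most `s`: for every vertex `v`,
every isometric path of `G` can be vertex-covered by at most `s` isometric paths
rooted at `v`. -/
def SipcoLe (G : SimpleGraph V) (s : ℕ) : Prop :=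
  ∀ v : V, ∀ ⦃x y : V⦄ (p : G.Walk x y), p.length = G.dist x y →
    ∃ n : ℕ, n ≤ s ∧ ∃ (e : Fin n → V) (Q : ∀ i, G.Walk v (e i)),
      (∀ i, (Q i).length = G.dist v (e i)) ∧
      ∀ z ∈ p.support, ∃ i, z ∈ (Q i).support

/-- The strong isometric path complexity of `G`. -/
noncomputable def sipco (G : SimpleGraph V) : ℕ := sInf {s | SipcoLe G s}

/-- `P` induces exactly two connected components `C₁`, `C₂` in `G`. -/
def SplitsTwo (G : SimpleGraph V) (P C₁ C₂ : Set V) : Prop :=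
  C₁ ∪ C₂ = P ∧ Disjoint C₁ C₂ ∧ C₁.Nonempty ∧ C₂.Nonempty ∧
  (G.induce C₁).Connected ∧ (G.induce C₂).Connected ∧
  ∀ u ∈ C₁, ∀ v ∈ C₂, ¬ G.Adj u v

/-- The star of edges joining each vertex of `D` to `w`. -/
def starEdges (w : V) (D : Set V) : Set (Sym2 V) := {e | ∃ v ∈ D, e = s(v, w)}

/-- Vertices of `S` with a `G`-neighbour in `C`. -/
def Dset (G : SimpleGraph V) (S C : Set V) : Set V := {u ∈ S | ∃ v ∈ C, G.Adj u v}

/-- Admissible edge sets `E` produced by Algorithm 1 when processing a cluster `S`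
with parent set `P`. -/
def ClusterEdges (G : SimpleGraph V) (S P : Set V) (E : Set (Sym2 V)) : Prop :=
  ((G.induce P).Connected ∧ ∃ w ∈ P, E = starEdges w S) ∨
  ∃ C₁ C₂, SplitsTwo G P C₁ C₂ ∧ ∃ w₁ ∈ C₁, ∃ w₂ ∈ C₂,
    ((Dset G S C₁ ∩ Dset G S C₂ = ∅ ∧
       ((¬ (∃ u ∈ Dset G S C₁, ∃ v ∈ Dset G S C₂, G.Adj u v) ∧
          E = starEdges w₁ (Dset G S C₁) ∪ starEdges w₂ (Dset G S C₂)) ∨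
        (∃ u ∈ Dset G S C₁, ∃ v ∈ Dset G S C₂, G.Adj u v ∧
          E = starEdges w₁ (Dset G S C₁) ∪ starEdges w₂ (Dset G S C₂) ∪ {s(u, v)})))
     ∨
     ((Dset G S C₁ ∩ Dset G S C₂).Nonempty ∧
       ∃ u ∈ Dset G S C₁ ∩ Dset G S C₂,
         E = starEdges w₁ (Dset G S C₁) ∪
             starEdges w₂ (Dset G S C₂ \ Dset G S C₁) ∪ {s(u, w₂)}))

/-- `H` is a possible output of the cluster-rewiring algorithm (Algorithm 1) on `(G, r)`. -/
def IsAlgoOutput (G : SimpleGraph V) (r : V) (H : SimpleGraph V) : Prop :=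
  ∃ f : Set V → Set (Sym2 V),
    (∀ S k, 1 ≤ k → IsCluster G r k S → ClusterEdges G S (parentSet G r k S) (f S)) ∧
    H.edgeSet = ⋃ S ∈ {S : Set V | ∃ k, 1 ≤ k ∧ IsCluster G r k S}, f S

/-- The type of clusters of the layering partition of `G` rooted at `r`. -/
def ClusterType (G : SimpleGraph V) (r : V) : Type := {S : Set V // ∃ k, IsCluster G r k S}

/-- The layering tree: clusters, adjacent when `G` has an edge between them. -/
def layeringTree (G : SimpleGraph V) (r : V) : SimpleGraph (ClusterType G r) :=
  SimpleGraph.fromRel (fun S T => ∃ u ∈ S.1, ∃ v ∈ T.1, G.Adj u v)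

/-- `A` is a connected component of `G - C`. -/
def IsCompOf (G : SimpleGraph V) (C A : Set V) : Prop :=
  A.Nonempty ∧ Disjoint A C ∧ (G.induce A).Connected ∧
  ∀ u ∈ A, ∀ v, v ∉ A → v ∉ C → ¬ G.Adj u v

theorem _root_.SimpleGraph.isAcyclic_of_unique_lower_neighbor {W α : Type*} [LinearOrder α]
    {H : SimpleGraph W} (f : W → α) (hne : ∀ ⦃x y⦄, H.Adj x y → f x ≠ f y)
    (huniq : ∀ ⦃x y z⦄, H.Adj x y → H.Adj x z → f y < f x → f z < f x → y = z) :
    H.IsAcyclic := by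
  classical
  intro v c hc
  obtain ⟨t, ht, hmax⟩ := c.support.toFinset.exists_max_image f ⟨v, by simp⟩
  rw [List.mem_toFinset] at ht
  let c' := c.rotate t ht
  have hc' : c'.IsCycle := hc.rotate ht
  have lower : ∀ y, H.Adj t y → y ∈ c'.support → f y < f t := fun y hy hyc =>
    (hmax y (by simpa [c'] using hyc)).lt_of_ne (hne hy).symm
  have hsnd := c'.adj_snd hc'.not_nil
  have hpen := (c'.adj_penultimate hc'.not_nil).symm
  exact hc'.snd_ne_penultimate <| huniq hsnd hpen
    (lower _ hsnd (c'.getVert_mem_support _)) (lower _ hpen (c'.getVert_mem_support _))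

section Clusters

variable {G : SimpleGraph V} {B B' S T T' : Set V} {r u v w : V} {k j : ℕ}

namespace ConnOutside

lemma refl (hu : u ∈ Bᶜ) : ConnOutside G B u u := ⟨hu, hu, .refl _⟩

lemma symm (h : ConnOutside G B u v) : ConnOutside G B v u :=
  let ⟨hu, hv, huv⟩ := h; ⟨hv, hu, huv.symm⟩

lemma trans (h₁ : ConnOutside G B u v) (h₂ : ConnOutside G B v w) : ConnOutside G B u w :=
  let ⟨hu, _, huv⟩ := h₁; let ⟨_, hw, hvw⟩ := h₂; ⟨hu, hw, huv.trans hvw⟩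

lemma of_adj (hu : u ∈ Bᶜ) (hv : v ∈ Bᶜ) (h : G.Adj u v) : ConnOutside G B u v :=
  ⟨hu, hv, Adj.reachable (by simpa using h)⟩

lemma mono (hB : B' ⊆ B) (h : ConnOutside G B u v) : ConnOutside G B' u v :=
  let ⟨hu, hv, huv⟩ := h
  have hB' : Bᶜ ⊆ B'ᶜ := Set.compl_subset_compl.2 hB
  ⟨hB' hu, hB' hv, huv.map (G.induceHomOfLE hB').toHom⟩

end ConnOutside

lemma mem_compl_ball (h : k ≤ G.dist r u) : u ∈ ({x | G.dist r x < k} : Set V)ᶜ := by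
  simpa using h

def clusterOf (G : SimpleGraph V) (r v : V) : Set V :=
  {w | G.dist r w = G.dist r v ∧ ConnOutside G {x | G.dist r x < G.dist r v} v w}

lemma mem_clusterOf_self (G : SimpleGraph V) (r v : V) : v ∈ clusterOf G r v :=
  ⟨rfl, .refl (mem_compl_ball le_rfl)⟩

lemma isCluster_clusterOf (G : SimpleGraph V) (r v : V) :
    IsCluster G r (G.dist r v) (clusterOf G r v) :=
  ⟨⟨v, mem_clusterOf_self G r v⟩, fun _ hw => hw.1, fun _ ha _ hb => ha.2.symm.trans hb.2,
    fun _ hsub hdist hconn w hw => ⟨hdist w hw, hconn v (hsub (mem_clusterOf_self G r v)) w hw⟩⟩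

namespace IsCluster

lemma dist_eq (hS : IsCluster G r k S) (hv : v ∈ S) : G.dist r v = k := hS.2.1 v hv

lemma eq_of_connOutside (hS : IsCluster G r k S) (hT : IsCluster G r k T) (hu : u ∈ S)
    (hv : v ∈ T) (huv : ConnOutside G {x | G.dist r x < k} u v) : S = T := by
  have hdist : ∀ x ∈ S ∪ T, G.dist r x = k := by
    rintro x (hx | hx)
    exacts [hS.dist_eq hx, hT.dist_eq hx]
  have hconn : ∀ x ∈ S ∪ T, ∀ y ∈ S ∪ T, ConnOutside G {x | G.dist r x < k} x y := by
    rintro x (hx | hx) y (hy | hy)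
    · exact hS.2.2.1 x hx y hy
    · exact ((hS.2.2.1 x hx u hu).trans huv).trans (hT.2.2.1 v hv y hy)
    · exact ((hT.2.2.1 x hx v hv).trans huv.symm).trans (hS.2.2.1 u hu y hy)
    · exact hT.2.2.1 x hx y hy
  exact (Set.subset_union_left.trans (hT.2.2.2 _ Set.subset_union_right hdist hconn)).antisymm
    (Set.subset_union_right.trans (hS.2.2.2 _ Set.subset_union_left hdist hconn))

lemma eq_of_mem (hS : IsCluster G r k S) (hT : IsCluster G r j T) (hvS : v ∈ S) (hvT : v ∈ T) :
    S = T := by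
  obtain rfl : k = j := (hS.dist_eq hvS).symm.trans (hT.dist_eq hvT)
  exact hS.eq_of_connOutside hT hvS hvT (.refl (mem_compl_ball (hS.dist_eq hvS).ge))

lemma eq_of_adj (hS : IsCluster G r k S) (hT : IsCluster G r k T) (hu : u ∈ S) (hv : v ∈ T)
    (h : G.Adj u v) : S = T :=
  hS.eq_of_connOutside hT hu hv
    (.of_adj (mem_compl_ball (hS.dist_eq hu).ge) (mem_compl_ball (hT.dist_eq hv).ge) h)

lemma level_succ_of_adj (hS : IsCluster G r k S) (hT : IsCluster G r j T) (hu : u ∈ S)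
    (hv : v ∈ T) (h : G.Adj u v) (hne : S ≠ T) : k = j + 1 ∨ j = k + 1 := by
  have hkj : k ≠ j := by
    rintro rfl
    exact hne (hS.eq_of_adj hT hu hv h)
  have := h.diff_dist_adj (u := r)
  rw [hS.dist_eq hu, hT.dist_eq hv] at this
  omega

lemma parent_unique (hS : IsCluster G r (k + 1) S) (hT : IsCluster G r k T)
    (hT' : IsCluster G r k T') {u u' v v' : V} (hu : u ∈ S) (hv : v ∈ T) (h : G.Adj u v)
    (hu' : u' ∈ S) (hv' : v' ∈ T') (h' : G.Adj u' v') : T = T' := by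
  have outside : ∀ {x}, x ∈ S → x ∈ ({x | G.dist r x < k} : Set V)ᶜ := fun hx =>
    mem_compl_ball (by rw [hS.dist_eq hx]; exact k.le_succ)
  have huu' : ConnOutside G {x | G.dist r x < k} u u' :=
    (hS.2.2.1 u hu u' hu').mono fun x hx => Nat.lt_succ_of_lt hx
  refine hT.eq_of_connOutside hT' hv hv' ?_
  exact ((ConnOutside.of_adj (mem_compl_ball (hT.dist_eq hv).ge) (outside hu) h.symm).trans
    huu').trans (.of_adj (outside hu') (mem_compl_ball (hT'.dist_eq hv').ge) h')

end IsCluster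

end Clusters

namespace ClusterType

variable {G : SimpleGraph V} {r : V}

def ofVertex (G : SimpleGraph V) (r v : V) : ClusterType G r :=
  ⟨clusterOf G r v, _, isCluster_clusterOf G r v⟩

lemma ofVertex_surjective : Function.Surjective (ofVertex G r) := by
  rintro ⟨S, k, hS⟩
  obtain ⟨v, hv⟩ := hS.1
  exact ⟨v, Subtype.ext ((isCluster_clusterOf G r v).eq_of_mem hS (mem_clusterOf_self G r v) hv)⟩

noncomputable def level (S : ClusterType G r) : ℕ := S.2.choose

lemma isCluster_level (S : ClusterType G r) : IsCluster G r S.level S.1 := S.2.choose_spec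

end ClusterType

section LayeringTree

open ClusterType

variable {G : SimpleGraph V} {r u v : V} {S T X Y : ClusterType G r}

lemma layeringTree_adj_iff :
    (layeringTree G r).Adj S T ↔ S ≠ T ∧ ∃ u ∈ S.1, ∃ v ∈ T.1, G.Adj u v := by
  refine ⟨fun ⟨hne, h⟩ => ⟨hne, ?_⟩, fun ⟨hne, h⟩ => ⟨hne, .inl h⟩⟩
  rcases h with h | ⟨u, hu, v, hv, huv⟩
  exacts [h, ⟨v, hv, u, hu, huv.symm⟩]

lemma layeringTree_adj_or_eq_of_adj (h : G.Adj u v) :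
    (layeringTree G r).Adj (ofVertex G r u) (ofVertex G r v) ∨ ofVertex G r u = ofVertex G r v := by
  by_cases heq : ofVertex G r u = ofVertex G r v
  · exact .inr heq
  · exact .inl (layeringTree_adj_iff.2
      ⟨heq, u, mem_clusterOf_self G r u, v, mem_clusterOf_self G r v, h⟩)

lemma layeringTree_connected (hG : G.Connected) : (layeringTree G r).Connected := by
  have reach : ∀ u v, (layeringTree G r).Reachable (ofVertex G r u) (ofVertex G r v) := by
    intro u v
    rw [reachable_iff_reflTransGen]
    refine ((reachable_iff_reflTransGen u v).1 (hG u v)).lift' _ fun a b hab => ?_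
    rcases layeringTree_adj_or_eq_of_adj hab with h | h
    exacts [.single h, by rw [Function.onFun, h]]
  have : Nonempty (ClusterType G r) := ⟨ofVertex G r r⟩
  refine ⟨fun S T => ?_⟩
  obtain ⟨u, rfl⟩ := ofVertex_surjective S
  obtain ⟨v, rfl⟩ := ofVertex_surjective T
  exact reach u v

lemma layeringTree_level_succ_of_adj (h : (layeringTree G r).Adj S T) :
    S.level = T.level + 1 ∨ T.level = S.level + 1 := by
  obtain ⟨hne, u, hu, v, hv, huv⟩ := layeringTree_adj_iff.1 h
  exact (isCluster_level S).level_succ_of_adj (isCluster_level T) hu hv huv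
    (fun h => hne (Subtype.ext h))

lemma layeringTree_lower_neighbor_unique (hX : (layeringTree G r).Adj T X)
    (hY : (layeringTree G r).Adj T Y) (hXT : X.level < T.level) (hYT : Y.level < T.level) :
    X = Y := by
  have hX' : T.level = X.level + 1 := by have := layeringTree_level_succ_of_adj hX; omega
  have hY' : Y.level = X.level := by have := layeringTree_level_succ_of_adj hY; omega
  obtain ⟨-, u, hu, x, hx, hux⟩ := layeringTree_adj_iff.1 hX
  obtain ⟨-, u', hu', y, hy, huy⟩ := layeringTree_adj_iff.1 hY
  exact Subtype.ext <| (hX' ▸ isCluster_level T).parent_unique (isCluster_level X)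
    (hY' ▸ isCluster_level Y) hu hx hux hu' hy huy

lemma layeringTree_isAcyclic : (layeringTree G r).IsAcyclic :=
  isAcyclic_of_unique_lower_neighbor level
    (fun _ _ h => by have := layeringTree_level_succ_of_adj h; omega)
    fun _ _ _ => layeringTree_lower_neighbor_unique

end LayeringTree

theorem stmt7_general {V : Type} (G : SimpleGraph V) (hG : G.Connected) (r : V) :
    (layeringTree G r).IsTree :=
  ⟨layeringTree_connected hG, layeringTree_isAcyclic⟩

theorem stmt7 {V : Type} [Fintype V] (G : SimpleGraph V) (hG : G.Connected) (r : V) :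
    (layeringTree G r).IsTree :=
  stmt7_general G hG r

end Paper
end

section
/- Let G be a K_{2,3}-induced-minor-free graph, r a vertex, S a cluster w.r.t. r, and S₁, S₂ two children of S in the layering tree T(G,r) such that for each i ∈ {1,2}, the subgraph induced by the parent set of S_i has exactly two connected components C_i and D_i. Then at most one pair (Y,Z) with Y ∈ {C₁,D₁} and Z ∈ {C₂,D₂} satisfies V(Y) ∩ V(Z) ≠ ∅. -/
open SimpleGraph

namespace Paper

variable {V : Type}

section Helpers

variable {G : SimpleGraph V} {B : Set V} {u v w : V}

lemma ConnOutside.refl_s8 (hu : u ∈ Bᶜ) : ConnOutside G B u u := ⟨hu, hu, .refl _⟩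

lemma ConnOutside.symm' : ConnOutside G B u v → ConnOutside G B v u
  | ⟨hu, hv, h⟩ => ⟨hv, hu, h.symm⟩

lemma ConnOutside.trans' : ConnOutside G B u v → ConnOutside G B v w → ConnOutside G B u w
  | ⟨hu, hv, h⟩, ⟨hv', hw, h'⟩ => ⟨hu, hw, h.trans h'⟩

lemma ConnOutside.of_adj_s8 (hu : u ∈ Bᶜ) (hv : v ∈ Bᶜ) (h : G.Adj u v) :
    ConnOutside G B u v :=
  ⟨hu, hv, SimpleGraph.Adj.reachable (by simpa using h)⟩

lemma exists_adj_dist_pred (hG : G.Connected) {r y : V} {k : ℕ} (hk : 1 ≤ k)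
    (h : G.dist r y = k) : ∃ w, G.Adj w y ∧ G.dist r w = k - 1 := by
  obtain ⟨p, hp⟩ := hG.exists_walk_length_eq_dist y r
  rw [SimpleGraph.dist_comm, h] at hp
  cases p with
  | nil => simp at hp; omega
  | cons ha q =>
    rename_i z
    refine ⟨z, ha.symm, ?_⟩
    have h1 : G.dist r z ≤ k - 1 := by
      have := SimpleGraph.dist_le q.reverse
      simp only [SimpleGraph.Walk.length_reverse] at this
      simp only [SimpleGraph.Walk.length_cons] at hp
      omega
    have h2 : k ≤ G.dist r z + 1 := by
      have ht := hG.dist_triangle (u := r) (v := z) (w := y)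
      have hzy : G.dist z y = 1 := SimpleGraph.dist_eq_one_iff_adj.mpr ha.symm
      omega
    omega

lemma ball_induce_connected (hG : G.Connected) (r : V) {k : ℕ} (hk : 1 ≤ k) :
    (G.induce {w | G.dist r w < k}).Connected := by
  have hr : r ∈ {w | G.dist r w < k} := by
    simp only [Set.mem_setOf_eq, SimpleGraph.dist_self]; omega
  rw [SimpleGraph.connected_iff]
  refine ⟨?_, ⟨⟨r, hr⟩⟩⟩
  have key : ∀ n (w : V) (hw : w ∈ {w | G.dist r w < k}), G.dist r w = n →
      (G.induce {w | G.dist r w < k}).Reachable ⟨w, hw⟩ ⟨r, hr⟩ := by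
    intro n
    induction n with
    | zero =>
      intro w hw h0
      have : w = r := (((hG r w).dist_eq_zero_iff).mp h0).symm
      subst this
      exact .refl _
    | succ n ih =>
      intro w hw h
      obtain ⟨w', haw, hd⟩ := exists_adj_dist_pred hG (by omega) h
      have hw' : w' ∈ {w | G.dist r w < k} := by
        simp only [Set.mem_setOf_eq] at hw ⊢; omega
      have hadj : (G.induce {w | G.dist r w < k}).Adj ⟨w, hw⟩ ⟨w', hw'⟩ := by
        simpa using haw.symm
      exact hadj.reachable.trans (ih w' hw' (by omega))
  intro a b
  exact (key _ a.1 a.2 rfl).trans (key _ b.1 b.2 rfl).symm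

lemma comp_walk_lift {u₀ : V} :
    ∀ {x y : ↑Bᶜ} (_ : (G.induce Bᶜ).Walk x y) (hx : x.1 ∈ {v | ConnOutside G B u₀ v}),
      ∃ hy : y.1 ∈ {v | ConnOutside G B u₀ v},
        (G.induce {v | ConnOutside G B u₀ v}).Reachable ⟨x.1, hx⟩ ⟨y.1, hy⟩ := by
  intro x y p
  induction p with
  | nil => intro hx; exact ⟨hx, .refl _⟩
  | cons hadj q ih =>
    rename_i a b c
    intro hx
    have hG' : G.Adj a.1 b.1 := by simpa using hadj
    have hb : b.1 ∈ {v | ConnOutside G B u₀ v} :=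
      ConnOutside.trans' hx (ConnOutside.of_adj_s8 a.2 b.2 hG')
    obtain ⟨hy, hr⟩ := ih hb
    refine ⟨hy, ?_⟩
    have hadj2 : (G.induce {v | ConnOutside G B u₀ v}).Adj ⟨a.1, hx⟩ ⟨b.1, hb⟩ := by
      simpa using hG'
    exact hadj2.reachable.trans hr

lemma comp_induce_connected {u₀ : V} (h₀ : u₀ ∈ Bᶜ) :
    (G.induce {v | ConnOutside G B u₀ v}).Connected := by
  rw [SimpleGraph.connected_iff]
  have hu₀ : u₀ ∈ {v | ConnOutside G B u₀ v} := ConnOutside.refl_s8 h₀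
  refine ⟨?_, ⟨⟨u₀, hu₀⟩⟩⟩
  have key : ∀ a : ↑{v | ConnOutside G B u₀ v},
      (G.induce {v | ConnOutside G B u₀ v}).Reachable ⟨u₀, hu₀⟩ a := by
    intro a
    obtain ⟨h1, h2, hreach⟩ := a.2
    obtain ⟨p⟩ := hreach
    obtain ⟨hy, hr⟩ := comp_walk_lift (u₀ := u₀) p hu₀
    exact hr
  intro a b
  exact (key a).symm.trans (key b)

lemma singleton_induce_connected (G : SimpleGraph V) (y : V) :
    (G.induce {y}).Connected := by
  rw [SimpleGraph.connected_iff]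
  refine ⟨fun a b => ?_, ⟨⟨y, rfl⟩⟩⟩
  have : a = b := Subtype.ext (a.2.trans b.2.symm)
  rw [this]

end Helpers

theorem stmt8 {V : Type} [Fintype V] (G : SimpleGraph V) (hG : G.Connected)
    (hfree : K23Free G) (r : V) (k : ℕ) (S S₁ S₂ : Set V)
    (hS : IsCluster G r k S)
    (h1 : IsCluster G r (k + 1) S₁) (h2 : IsCluster G r (k + 1) S₂) (hne : S₁ ≠ S₂)
    (hc1 : ∃ u ∈ S₁, ∃ v ∈ S, G.Adj u v) (hc2 : ∃ u ∈ S₂, ∃ v ∈ S, G.Adj u v)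
    (C₁ D₁ C₂ D₂ : Set V)
    (hs1 : SplitsTwo G (parentSet G r (k + 1) S₁) C₁ D₁)
    (hs2 : SplitsTwo G (parentSet G r (k + 1) S₂) C₂ D₂) :
    {p : Set V × Set V | (p.1 = C₁ ∨ p.1 = D₁) ∧ (p.2 = C₂ ∨ p.2 = D₂) ∧
      (p.1 ∩ p.2).Nonempty}.Subsingleton := by
  rintro ⟨Y, Z⟩ ⟨hY, hZ, y, hyY, hyZ⟩ ⟨Y', Z'⟩ ⟨hY', hZ', y', hyY', hyZ'⟩
  by_contra hpq'
  have hpq : Y ≠ Y' ∨ Z ≠ Z' := by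
    by_contra h
    push_neg at h
    exact hpq' (by simp [Prod.ext_iff, h.1, h.2])
  obtain ⟨hS1ne, hS1d, hS1c, hS1max⟩ := h1
  obtain ⟨hS2ne, hS2d, hS2c, hS2max⟩ := h2
  obtain ⟨hun1, hdisj1, hCne1, hDne1, hCc1, hDc1, hnadj1⟩ := hs1
  obtain ⟨hun2, hdisj2, hCne2, hDne2, hCc2, hDc2, hnadj2⟩ := hs2
  -- y and y' are distinct and non-adjacent
  have hsepkey : ∀ (C D W W' : Set V), Disjoint C D →
      (∀ u ∈ C, ∀ v ∈ D, ¬ G.Adj u v) → (W = C ∨ W = D) → (W' = C ∨ W' = D) →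
      W ≠ W' → ∀ z ∈ W, ∀ z' ∈ W', z ≠ z' ∧ ¬ G.Adj z z' := by
    intro C D W W' hd hna hW hW' hne z hz z' hz'
    rcases hW with rfl | rfl <;> rcases hW' with rfl | rfl
    · exact absurd rfl hne
    · refine ⟨fun h => Set.disjoint_left.mp hd hz (h ▸ hz'), hna z hz z' hz'⟩
    · refine ⟨fun h => Set.disjoint_left.mp hd hz' (h ▸ hz), fun h => hna z' hz' z hz h.symm⟩
    · exact absurd rfl hne
  have hkey : y ≠ y' ∧ ¬ G.Adj y y' := by
    rcases hpq with hYY | hZZ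
    · exact hsepkey C₁ D₁ Y Y' hdisj1 hnadj1 hY hY' hYY y hyY y' hyY'
    · exact hsepkey C₂ D₂ Z Z' hdisj2 hnadj2 hZ hZ' hZZ y hyZ y' hyZ'
  -- y and y' belong to both parent sets
  have hyP1 : y ∈ parentSet G r (k + 1) S₁ := by
    rcases hY with rfl | rfl
    · exact hun1 ▸ Set.mem_union_left _ hyY
    · exact hun1 ▸ Set.mem_union_right _ hyY
  have hy'P1 : y' ∈ parentSet G r (k + 1) S₁ := by
    rcases hY' with rfl | rfl
    · exact hun1 ▸ Set.mem_union_left _ hyY'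
    · exact hun1 ▸ Set.mem_union_right _ hyY'
  have hyP2 : y ∈ parentSet G r (k + 1) S₂ := by
    rcases hZ with rfl | rfl
    · exact hun2 ▸ Set.mem_union_left _ hyZ
    · exact hun2 ▸ Set.mem_union_right _ hyZ
  have hy'P2 : y' ∈ parentSet G r (k + 1) S₂ := by
    rcases hZ' with rfl | rfl
    · exact hun2 ▸ Set.mem_union_left _ hyZ'
    · exact hun2 ▸ Set.mem_union_right _ hyZ'
  have hyd : G.dist r y = k := hyP1.1
  have hy'd : G.dist r y' = k := hy'P1.1
  obtain ⟨uy1, huy1S, hadjy1⟩ := hyP1.2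
  obtain ⟨uy2, huy2S, hadjy2⟩ := hyP2.2
  obtain ⟨uy1', huy1S', hadjy1'⟩ := hy'P1.2
  obtain ⟨uy2', huy2S', hadjy2'⟩ := hy'P2.2
  -- k ≥ 1
  have hk : 1 ≤ k := by
    by_contra hk0
    have hk0 : k = 0 := by omega
    have hy0 : y = r := (((hG r y).dist_eq_zero_iff).mp (by omega)).symm
    have hy'0 : y' = r := (((hG r y').dist_eq_zero_iff).mp (by omega)).symm
    exact hkey.1 (hy0.trans hy'0.symm)
  -- the two components outside the ball of radius k, and the ball of radius k-1
  obtain ⟨u₀, hu₀S⟩ := hS1ne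
  obtain ⟨u₀', hu₀S'⟩ := hS2ne
  set Bk : Set V := {w | G.dist r w < k + 1} with hBkdef
  set Bm : Set V := {w | G.dist r w < k} with hBmdef
  have hu₀c : u₀ ∈ Bkᶜ := by
    simp only [hBkdef, Set.mem_compl_iff, Set.mem_setOf_eq, not_lt]
    have := hS1d u₀ hu₀S; omega
  have hu₀c' : u₀' ∈ Bkᶜ := by
    simp only [hBkdef, Set.mem_compl_iff, Set.mem_setOf_eq, not_lt]
    have := hS2d u₀' hu₀S'; omega
  set X₁ : Set V := {v | ConnOutside G Bk u₀ v} with hX₁def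
  set X₂ : Set V := {v | ConnOutside G Bk u₀' v} with hX₂def
  have hSX₁ : ∀ u ∈ S₁, u ∈ X₁ := fun u hu => hS1c u₀ hu₀S u hu
  have hSX₂ : ∀ u ∈ S₂, u ∈ X₂ := fun u hu => hS2c u₀' hu₀S' u hu
  -- u₀ and u₀' are not connected outside Bk
  have hsep : ¬ ConnOutside G Bk u₀ u₀' := by
    intro hco
    apply hne
    have hall : ∀ w ∈ S₁ ∪ S₂, ConnOutside G Bk u₀ w := by
      rintro w (hw | hw)
      · exact hS1c u₀ hu₀S w hw
      · exact hco.trans' (hS2c u₀' hu₀S' w hw)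
    have hsub : ∀ u ∈ S₁ ∪ S₂, ∀ v ∈ S₁ ∪ S₂, ConnOutside G Bk u v :=
      fun u hu v hv => (hall u hu).symm'.trans' (hall v hv)
    have hdist : ∀ v ∈ S₁ ∪ S₂, G.dist r v = k + 1 := by
      rintro v (hv | hv)
      · exact hS1d v hv
      · exact hS2d v hv
    have h12 := hS1max (S₁ ∪ S₂) Set.subset_union_left hdist hsub
    have h21 := hS2max (S₁ ∪ S₂) Set.subset_union_right hdist hsub
    exact Set.Subset.antisymm (Set.subset_union_left.trans h21)
      (Set.subset_union_right.trans h12)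
  -- vertices of X₁, X₂ are far from r
  have hX₁far : ∀ v ∈ X₁, k + 1 ≤ G.dist r v := by
    rintro v ⟨_, hv, _⟩
    simp only [hBkdef, Set.mem_compl_iff, Set.mem_setOf_eq, not_lt] at hv
    omega
  have hX₂far : ∀ v ∈ X₂, k + 1 ≤ G.dist r v := by
    rintro v ⟨_, hv, _⟩
    simp only [hBkdef, Set.mem_compl_iff, Set.mem_setOf_eq, not_lt] at hv
    omega
  have hX₁X₂ : ∀ v, v ∈ X₁ → v ∉ X₂ := fun v h1v h2v => hsep (h1v.trans' h2v.symm')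
  have hX₁X₂adj : ∀ u ∈ X₁, ∀ v ∈ X₂, ¬ G.Adj u v := by
    rintro u hu v hv hadj
    obtain ⟨_, huB, -⟩ := id hu
    obtain ⟨_, hvB, -⟩ := id hv
    exact hX₁X₂ v (ConnOutside.trans' hu (ConnOutside.of_adj_s8 huB hvB hadj)) hv
  -- no edges between X's and the small ball
  have hXBadj : ∀ c, (k + 1 ≤ G.dist r c) → ∀ v ∈ Bm, ¬ G.Adj c v := by
    intro c hc v hv hadj
    simp only [hBmdef, Set.mem_setOf_eq] at hv
    have ht := hG.dist_triangle (u := r) (v := v) (w := c)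
    have h1 : G.dist v c = 1 := SimpleGraph.dist_eq_one_iff_adj.mpr hadj.symm
    omega
  -- neighbours of y, y' in the small ball
  obtain ⟨wy, hwyadj, hwyd⟩ := exists_adj_dist_pred hG hk hyd
  obtain ⟨wy', hwyadj', hwyd'⟩ := exists_adj_dist_pred hG hk hy'd
  have hwyB : wy ∈ Bm := by simp only [hBmdef, Set.mem_setOf_eq]; omega
  have hwyB' : wy' ∈ Bm := by simp only [hBmdef, Set.mem_setOf_eq]; omega
  -- disjointness facts
  have hyX₁ : y ∉ X₁ := fun h => by have := hX₁far y h; omega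
  have hyX₂ : y ∉ X₂ := fun h => by have := hX₂far y h; omega
  have hy'X₁ : y' ∉ X₁ := fun h => by have := hX₁far y' h; omega
  have hy'X₂ : y' ∉ X₂ := fun h => by have := hX₂far y' h; omega
  have hyBm : y ∉ Bm := by simp only [hBmdef, Set.mem_setOf_eq]; omega
  have hy'Bm : y' ∉ Bm := by simp only [hBmdef, Set.mem_setOf_eq]; omega
  have hX₁Bm : ∀ v ∈ X₁, v ∉ Bm := by
    intro v hv hvB
    have := hX₁far v hv
    simp only [hBmdef, Set.mem_setOf_eq] at hvB
    omega
  have hX₂Bm : ∀ v ∈ X₂, v ∉ Bm := by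
    intro v hv hvB
    have := hX₂far v hv
    simp only [hBmdef, Set.mem_setOf_eq] at hvB
    omega
  -- the K_{2,3} induced minor model
  apply hfree
  refine ⟨Sum.elim ![{y}, {y'}] ![X₁, X₂, Bm], ?_, ?_, ?_, ?_⟩
  · rintro (i | i) <;> fin_cases i
    · exact ⟨y, rfl⟩
    · exact ⟨y', rfl⟩
    · exact ⟨u₀, ConnOutside.refl_s8 hu₀c⟩
    · exact ⟨u₀', ConnOutside.refl_s8 hu₀c'⟩
    · refine ⟨r, show r ∈ Bm from ?_⟩
      simp only [hBmdef, Set.mem_setOf_eq, SimpleGraph.dist_self]; omega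
  · rintro (i | i) <;> fin_cases i
    · exact singleton_induce_connected G y
    · exact singleton_induce_connected G y'
    · exact comp_induce_connected hu₀c
    · exact comp_induce_connected hu₀c'
    · exact ball_induce_connected hG r hk
  · rintro (i | i) (j | j) hij <;> fin_cases i <;> fin_cases j <;>
      first
        | exact absurd rfl hij
        | skip
    · exact Set.disjoint_singleton.mpr hkey.1
    · exact Set.disjoint_singleton.mpr hkey.1.symm
    · exact Set.disjoint_singleton_left.mpr hyX₁
    · exact Set.disjoint_singleton_left.mpr hyX₂
    · exact Set.disjoint_singleton_left.mpr hyBm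
    · exact Set.disjoint_singleton_left.mpr hy'X₁
    · exact Set.disjoint_singleton_left.mpr hy'X₂
    · exact Set.disjoint_singleton_left.mpr hy'Bm
    · exact Set.disjoint_singleton_right.mpr hyX₁
    · exact Set.disjoint_singleton_right.mpr hy'X₁
    · exact Set.disjoint_singleton_right.mpr hyX₂
    · exact Set.disjoint_singleton_right.mpr hy'X₂
    · exact Set.disjoint_singleton_right.mpr hyBm
    · exact Set.disjoint_singleton_right.mpr hy'Bm
    · exact Set.disjoint_left.mpr hX₁X₂
    · exact Set.disjoint_left.mpr hX₁Bm
    · exact (Set.disjoint_left.mpr hX₁X₂).symm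
    · exact Set.disjoint_left.mpr hX₂Bm
    · exact (Set.disjoint_left.mpr hX₁Bm).symm
    · exact (Set.disjoint_left.mpr hX₂Bm).symm
  · rintro (i | i) (j | j) hij <;> fin_cases i <;> fin_cases j <;>
      first
        | exact absurd rfl hij
        | skip
    · refine iff_of_false (by simp [completeBipartiteGraph]) ?_
      rintro ⟨u, rfl, v, rfl, h⟩
      exact hkey.2 h
    · refine iff_of_false (by simp [completeBipartiteGraph]) ?_
      rintro ⟨u, rfl, v, rfl, h⟩
      exact hkey.2 h.symm
    · exact iff_of_true (by simp [completeBipartiteGraph])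
        ⟨y, rfl, uy1, hSX₁ uy1 huy1S, hadjy1⟩
    · exact iff_of_true (by simp [completeBipartiteGraph])
        ⟨y, rfl, uy2, hSX₂ uy2 huy2S, hadjy2⟩
    · exact iff_of_true (by simp [completeBipartiteGraph])
        ⟨y, rfl, wy, hwyB, hwyadj.symm⟩
    · exact iff_of_true (by simp [completeBipartiteGraph])
        ⟨y', rfl, uy1', hSX₁ uy1' huy1S', hadjy1'⟩
    · exact iff_of_true (by simp [completeBipartiteGraph])
        ⟨y', rfl, uy2', hSX₂ uy2' huy2S', hadjy2'⟩
    · exact iff_of_true (by simp [completeBipartiteGraph])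
        ⟨y', rfl, wy', hwyB', hwyadj'.symm⟩
    · exact iff_of_true (by simp [completeBipartiteGraph])
        ⟨uy1, hSX₁ uy1 huy1S, y, rfl, hadjy1.symm⟩
    · exact iff_of_true (by simp [completeBipartiteGraph])
        ⟨uy1', hSX₁ uy1' huy1S', y', rfl, hadjy1'.symm⟩
    · exact iff_of_true (by simp [completeBipartiteGraph])
        ⟨uy2, hSX₂ uy2 huy2S, y, rfl, hadjy2.symm⟩
    · exact iff_of_true (by simp [completeBipartiteGraph])
        ⟨uy2', hSX₂ uy2' huy2S', y', rfl, hadjy2'.symm⟩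
    · exact iff_of_true (by simp [completeBipartiteGraph])
        ⟨wy, hwyB, y, rfl, hwyadj⟩
    · exact iff_of_true (by simp [completeBipartiteGraph])
        ⟨wy', hwyB', y', rfl, hwyadj'⟩
    · refine iff_of_false (by simp [completeBipartiteGraph]) ?_
      rintro ⟨u, hu, v, hv, h⟩
      exact hX₁X₂adj u hu v hv h
    · refine iff_of_false (by simp [completeBipartiteGraph]) ?_
      rintro ⟨u, hu, v, hv, h⟩
      exact hXBadj u (hX₁far u hu) v hv h
    · refine iff_of_false (by simp [completeBipartiteGraph]) ?_
      rintro ⟨u, hu, v, hv, h⟩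
      exact hX₁X₂adj v hv u hu h.symm
    · refine iff_of_false (by simp [completeBipartiteGraph]) ?_
      rintro ⟨u, hu, v, hv, h⟩
      exact hXBadj u (hX₂far u hu) v hv h
    · refine iff_of_false (by simp [completeBipartiteGraph]) ?_
      rintro ⟨u, hu, v, hv, h⟩
      exact hXBadj v (hX₁far v hv) u hu h.symm
    · refine iff_of_false (by simp [completeBipartiteGraph]) ?_
      rintro ⟨u, hu, v, hv, h⟩
      exact hXBadj v (hX₂far v hv) u hu h.symm

end Paper
end

section
/- Let G be a K_{2,3}-induced-minor-free graph, r a vertex, and H the graph output by the cluster-rewiring algorithm (Algorithm 1) on input (G, r). Then H is connected and for every vertex u, dist_H(r,u) = dist_G(r,u). -/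
open SimpleGraph

namespace Paper

variable {V : Type}

lemma connOutside_refl {G : SimpleGraph V} {B : Set V} {u : V} (hu : u ∈ Bᶜ) :
    ConnOutside G B u u := ⟨hu, hu, Reachable.refl _⟩

lemma connOutside_symm {G : SimpleGraph V} {B : Set V} {u v : V}
    (h : ConnOutside G B u v) : ConnOutside G B v u := by
  obtain ⟨hu, hv, hr⟩ := h; exact ⟨hv, hu, hr.symm⟩

lemma connOutside_trans {G : SimpleGraph V} {B : Set V} {u v w : V}
    (h1 : ConnOutside G B u v) (h2 : ConnOutside G B v w) : ConnOutside G B u w := by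
  obtain ⟨hu, hv, hr1⟩ := h1; obtain ⟨hv', hw, hr2⟩ := h2
  exact ⟨hu, hw, hr1.trans hr2⟩

lemma exists_cluster (G : SimpleGraph V) (r u : V) (k : ℕ)
    (hu : G.dist r u = k) : ∃ S, IsCluster G r k S ∧ u ∈ S := by
  set B : Set V := {w | G.dist r w < k} with hB
  have huB : u ∈ Bᶜ := by simp [hB, hu]
  refine ⟨{v | G.dist r v = k ∧ ConnOutside G B u v}, ⟨⟨u, hu, connOutside_refl huB⟩,
    fun v hv => hv.1, fun x hx y hy => connOutside_trans (connOutside_symm hx.2) hy.2,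
    ?_⟩, hu, connOutside_refl huB⟩
  intro S' hSS' hd hc v hv
  exact ⟨hd v hv, hc u (hSS' ⟨hu, connOutside_refl huB⟩) v hv⟩

lemma exists_parent (G : SimpleGraph V) {r u : V} (hr : G.Reachable r u)
    (hk : 1 ≤ G.dist r u) :
    ∃ w, G.Adj u w ∧ G.dist r w = G.dist r u - 1 := by
  obtain ⟨p, hp⟩ := hr.exists_walk_length_eq_dist
  have hne : u ≠ r := by
    rintro rfl; rw [SimpleGraph.dist_self] at hk; omega
  obtain ⟨w, hadj, q, hq⟩ := p.reverse.exists_eq_cons_of_ne hne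
  have hlen : q.length + 1 = G.dist r u := by
    have := congrArg SimpleGraph.Walk.length hq
    simpa [hp] using this.symm
  have h1 : G.dist r w ≤ G.dist r u - 1 := by
    have h := SimpleGraph.dist_le q.reverse
    rw [SimpleGraph.Walk.length_reverse] at h
    omega
  have h2 : G.dist r u ≤ G.dist r w + 1 := by
    obtain ⟨q', hq'⟩ := SimpleGraph.Reachable.exists_walk_length_eq_dist ⟨q.reverse⟩
    have h := SimpleGraph.dist_le (q'.concat hadj.symm)
    rw [SimpleGraph.Walk.length_concat, hq'] at h
    exact h
  exact ⟨w, hadj, by omega⟩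

lemma starEdges_mem {w z : V} {D : Set V} {e : Sym2 V}
    (he : e ∈ starEdges w D) (hz : z ∈ e) : z ∈ D ∨ z = w := by
  obtain ⟨v, hv, rfl⟩ := he
  rcases Sym2.mem_iff.mp hz with rfl | rfl
  · exact Or.inl hv
  · exact Or.inr rfl

lemma clusterEdges_levels {G : SimpleGraph V} {r : V} {k : ℕ} {S : Set V} {E : Set (Sym2 V)}
    (hS : ∀ v ∈ S, G.dist r v = k)
    (hce : ClusterEdges G S (parentSet G r k S) E) :
    ∀ e ∈ E, ∀ z ∈ e, G.dist r z = k ∨ G.dist r z = k - 1 := by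
  have hP : ∀ w ∈ parentSet G r k S, G.dist r w = k - 1 := fun w hw => hw.1
  intro e he z hz
  rcases hce with ⟨_, w, hwP, rfl⟩ | ⟨C₁, C₂, hsplit, w₁, hw₁, w₂, hw₂, hcases⟩
  · rcases starEdges_mem he hz with h | rfl
    · exact Or.inl (hS z h)
    · exact Or.inr (hP z hwP)
  · have hC1 : C₁ ⊆ parentSet G r k S := by rw [← hsplit.1]; exact Set.subset_union_left
    have hC2 : C₂ ⊆ parentSet G r k S := by rw [← hsplit.1]; exact Set.subset_union_right
    have hD1 : Dset G S C₁ ⊆ S := fun x hx => hx.1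
    have hD2 : Dset G S C₂ ⊆ S := fun x hx => hx.1
    rcases hcases with ⟨_, ⟨_, rfl⟩ | ⟨u, hu, v, hv, _, rfl⟩⟩ | ⟨_, u, hu, rfl⟩
    · rcases he with he | he
      · rcases starEdges_mem he hz with h | rfl
        · exact Or.inl (hS z (hD1 h))
        · exact Or.inr (hP z (hC1 hw₁))
      · rcases starEdges_mem he hz with h | rfl
        · exact Or.inl (hS z (hD2 h))
        · exact Or.inr (hP z (hC2 hw₂))
    · rcases he with (he | he) | he
      · rcases starEdges_mem he hz with h | rfl
        · exact Or.inl (hS z (hD1 h))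
        · exact Or.inr (hP z (hC1 hw₁))
      · rcases starEdges_mem he hz with h | rfl
        · exact Or.inl (hS z (hD2 h))
        · exact Or.inr (hP z (hC2 hw₂))
      · simp only [Set.mem_singleton_iff] at he
        subst he
        rcases Sym2.mem_iff.mp hz with rfl | rfl
        · exact Or.inl (hS _ (hD1 hu))
        · exact Or.inl (hS _ (hD2 hv))
    · rcases he with (he | he) | he
      · rcases starEdges_mem he hz with h | rfl
        · exact Or.inl (hS z (hD1 h))
        · exact Or.inr (hP z (hC1 hw₁))
      · rcases starEdges_mem he hz with h | rfl
        · exact Or.inl (hS z (hD2 h.1))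
        · exact Or.inr (hP z (hC2 hw₂))
      · simp only [Set.mem_singleton_iff] at he
        subst he
        rcases Sym2.mem_iff.mp hz with rfl | rfl
        · exact Or.inl (hS _ (hD1 hu.1))
        · exact Or.inr (hP _ (hC2 hw₂))

lemma clusterEdges_cover {G : SimpleGraph V} {S P : Set V} {E : Set (Sym2 V)}
    (hce : ClusterEdges G S P E) {u : V} (hu : u ∈ S)
    (hnb : ∃ w ∈ P, G.Adj u w) :
    ∃ w ∈ P, s(u, w) ∈ E := by
  rcases hce with ⟨_, w, hwP, rfl⟩ | ⟨C₁, C₂, hsplit, w₁, hw₁, w₂, hw₂, hcases⟩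
  · exact ⟨w, hwP, u, hu, rfl⟩
  · have hC1 : C₁ ⊆ P := by rw [← hsplit.1]; exact Set.subset_union_left
    have hC2 : C₂ ⊆ P := by rw [← hsplit.1]; exact Set.subset_union_right
    obtain ⟨w, hwP, hadj⟩ := hnb
    have hwC : w ∈ C₁ ∪ C₂ := by rw [hsplit.1]; exact hwP
    have hD : u ∈ Dset G S C₁ ∨ u ∈ Dset G S C₂ := by
      rcases hwC with h | h
      · exact Or.inl ⟨hu, w, h, hadj⟩
      · exact Or.inr ⟨hu, w, h, hadj⟩
    rcases hcases with ⟨_, ⟨_, rfl⟩ | ⟨a, ha, b, hb, _, rfl⟩⟩ | ⟨_, a, ha, rfl⟩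
    · rcases hD with h | h
      · exact ⟨w₁, hC1 hw₁, Or.inl ⟨u, h, rfl⟩⟩
      · exact ⟨w₂, hC2 hw₂, Or.inr ⟨u, h, rfl⟩⟩
    · rcases hD with h | h
      · exact ⟨w₁, hC1 hw₁, Or.inl (Or.inl ⟨u, h, rfl⟩)⟩
      · exact ⟨w₂, hC2 hw₂, Or.inl (Or.inr ⟨u, h, rfl⟩)⟩
    · by_cases h1 : u ∈ Dset G S C₁
      · exact ⟨w₁, hC1 hw₁, Or.inl (Or.inl ⟨u, h1, rfl⟩)⟩
      · rcases hD with h | h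
        · exact absurd h h1
        · exact ⟨w₂, hC2 hw₂, Or.inl (Or.inr ⟨u, ⟨h, h1⟩, rfl⟩)⟩

theorem stmt9 {V : Type} [Fintype V] (G : SimpleGraph V) (hG : G.Connected)
    (hfree : K23Free G) (r : V) (H : SimpleGraph V) (hH : IsAlgoOutput G r H) :
    H.Connected ∧ ∀ u : V, H.dist r u = G.dist r u := by
  classical
  obtain ⟨f, hf, hE⟩ := hH
  -- characterize H adjacency
  have hAdj : ∀ x y : V, H.Adj x y ↔
      ∃ S, (∃ k, 1 ≤ k ∧ IsCluster G r k S) ∧ s(x, y) ∈ f S := by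
    intro x y
    rw [← SimpleGraph.mem_edgeSet, hE]
    simp only [Set.mem_setOf_eq, Set.mem_iUnion]
    tauto
  -- step lemma: along H edges, level changes by at most 1
  have hstep : ∀ x y : V, H.Adj x y → G.dist r y ≤ G.dist r x + 1 := by
    intro x y hxy
    obtain ⟨S, ⟨k, hk, hS⟩, he⟩ := (hAdj x y).mp hxy
    have hlev := clusterEdges_levels hS.2.1 (hf S k hk hS) _ he
    have hx := hlev x (Sym2.mem_mk_left x y)
    have hy := hlev y (Sym2.mem_mk_right x y)
    omega
  -- every vertex at level ≥ 1 has an H-edge to level below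
  have hup : ∀ u : V, 1 ≤ G.dist r u →
      ∃ w, G.dist r w = G.dist r u - 1 ∧ H.Adj u w := by
    intro u hk1
    set k := G.dist r u with hkdef
    obtain ⟨S, hS, huS⟩ := exists_cluster G r u k rfl
    have hce := hf S k hk1 hS
    obtain ⟨w', hadj', hw'⟩ := exists_parent G (hG.preconnected r u) hk1
    have hw'P : w' ∈ parentSet G r k S := ⟨hw', u, huS, hadj'.symm⟩
    obtain ⟨w, hwP, hsw⟩ := clusterEdges_cover hce huS ⟨w', hw'P, hadj'⟩
    refine ⟨w, hwP.1, ?_⟩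
    exact (hAdj u w).mpr ⟨S, ⟨k, hk1, hS⟩, hsw⟩
  -- upward induction: reachability and dist upper bound in H
  have key : ∀ n : ℕ, ∀ u : V, G.dist r u = n → H.Reachable r u ∧ H.dist r u ≤ n := by
    intro n
    induction n with
    | zero =>
      intro u hu
      have : r = u := (hG.preconnected r u).dist_eq_zero_iff.mp hu
      subst this
      simp [SimpleGraph.Reachable.refl]
    | succ m ih =>
      intro u hu
      obtain ⟨w, hw, hadj⟩ := hup u (by omega)
      have hwm : G.dist r w = m := by omega
      obtain ⟨hreach, hdist⟩ := ih w hwm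
      refine ⟨hreach.trans hadj.symm.reachable, ?_⟩
      obtain ⟨p, hp⟩ := hreach.exists_walk_length_eq_dist
      have := SimpleGraph.dist_le (p.concat hadj.symm)
      rw [SimpleGraph.Walk.length_concat, hp] at this
      omega
  -- lower bound: any H-walk from r is at least as long as G-distance
  have lower : ∀ (a b : V) (p : H.Walk a b), G.dist r b ≤ G.dist r a + p.length := by
    intro a b p
    induction p with
    | nil => simp
    | cons h p ih =>
      have := hstep _ _ h
      rw [SimpleGraph.Walk.length_cons]
      omega
  have hreach : ∀ u, H.Reachable r u := fun u => (key _ u rfl).1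
  constructor
  · have : Nonempty V := ⟨r⟩
    exact ⟨fun a b => (hreach a).symm.trans (hreach b)⟩
  · intro u
    have h1 : H.dist r u ≤ G.dist r u := (key _ u rfl).2
    obtain ⟨p, hp⟩ := (hreach u).exists_walk_length_eq_dist
    have h2 := lower r u p
    rw [hp, SimpleGraph.dist_self] at h2
    omega

end Paper
end

section
/- Let G be a K_{2,3}-induced-minor-free graph, r a vertex, and H the output of the cluster-rewiring algorithm on (G, r). Then for every edge xy of G with dist_G(r,x) = dist_G(r,y), we have dist_H(x,y) ≤ 5. -/
open SimpleGraph

namespace Paper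

variable {V : Type}

/-! Two adjacent vertices `x`, `y` at the same distance from `r` lie in a common cluster `S`.
Every vertex of `S` has a neighbour in the parent set, so when the parent set splits into
`C₁`, `C₂` it lies in `D₁ ∪ D₂`. In `H`, vertices on the same side share a hub (distance 2);
otherwise `x` and `y` are joined through both hubs `w₁`, `w₂`, either via the vertex of
`D₁ ∩ D₂` attached to `w₂` (distance 4) or via the added edge between `D₁` and `D₂`
(distance 5), which exists because `xy` is itself such an edge of `G`. -/

lemma exists_adj_dist_eq_sub_one {G : SimpleGraph V} {r x : V} (h : G.dist r x ≠ 0) :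
    ∃ p, G.Adj p x ∧ G.dist r p = G.dist r x - 1 := by
  obtain ⟨q, hq⟩ := (Reachable.of_dist_ne_zero h).symm.exists_walk_length_eq_dist
  cases q with
  | nil => simp at h
  | @cons _ p _ hxp q =>
    refine ⟨p, hxp.symm, ?_⟩
    have hle : G.dist r p ≤ q.length := by rw [dist_comm]; exact G.dist_le q
    have hge : G.dist r x ≤ G.dist r p + 1 :=
      dist_eq_one_iff_adj.2 hxp.symm ▸ hxp.symm.reachable.dist_triangle_right r
    rw [Walk.length_cons, dist_comm] at hq
    omega

lemma dist_pos_of_adj_of_dist_eq {G : SimpleGraph V} {r x y : V} (hr : G.Reachable r x)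
    (hxy : G.Adj x y) (hd : G.dist r x = G.dist r y) : 0 < G.dist r x := by
  refine Nat.pos_of_ne_zero fun h0 => hxy.ne ?_
  rw [← hr.dist_eq_zero_iff.1 h0, (hr.trans hxy.reachable).dist_eq_zero_iff.1 (hd ▸ h0)]

lemma exists_isCluster_mem_of_adj {G : SimpleGraph V} {r x y : V} (hxy : G.Adj x y)
    (hd : G.dist r x = G.dist r y) :
    ∃ S, IsCluster G r (G.dist r x) S ∧ x ∈ S ∧ y ∈ S := by
  set k := G.dist r x
  set B : Set V := {w | G.dist r w < k}
  have hxB : x ∈ Bᶜ := by simp [B, k]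
  have hyB : y ∈ Bᶜ := by simp [B, k, hd]
  have hxx : ConnOutside G B x x := ⟨hxB, hxB, .refl _⟩
  refine ⟨{v | G.dist r v = k ∧ ConnOutside G B x v}, ⟨⟨x, rfl, hxx⟩, fun v hv => hv.1, ?_, ?_⟩,
    ⟨rfl, hxx⟩, ⟨hd.symm, hxB, hyB, Adj.reachable (by exact hxy)⟩⟩
  · rintro u ⟨-, _, hu, hxu⟩ v ⟨-, _, hv, hxv⟩
    exact ⟨hu, hv, hxu.symm.trans hxv⟩
  · intro S' hsub hdist hconn v hv
    exact ⟨hdist v hv, hconn x (hsub ⟨rfl, hxx⟩) v hv⟩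

lemma IsCluster.exists_adj_mem_parentSet {G : SimpleGraph V} {r : V} {k : ℕ} {S : Set V}
    (hS : IsCluster G r k S) (hk : 1 ≤ k) : ∀ z ∈ S, ∃ p ∈ parentSet G r k S, G.Adj z p := by
  intro z hz
  have hdz := hS.2.1 z hz
  obtain ⟨p, hpz, hp⟩ := exists_adj_dist_eq_sub_one (show G.dist r z ≠ 0 by omega)
  exact ⟨p, ⟨hdz ▸ hp, z, hz, hpz⟩, hpz.symm⟩

section Rewiring

variable {G H : SimpleGraph V} {S P : Set V} {x y : V}

lemma mem_Dset_union {C₁ C₂ : Set V} (hP : C₁ ∪ C₂ = P) (hcover : ∀ z ∈ S, ∃ p ∈ P, G.Adj z p)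
    {z : V} (hz : z ∈ S) : z ∈ Dset G S C₁ ∪ Dset G S C₂ := by
  obtain ⟨p, hp, hzp⟩ := hcover z hz
  rcases hP ▸ hp with hp | hp
  exacts [Or.inl ⟨hz, p, hp, hzp⟩, Or.inr ⟨hz, p, hp, hzp⟩]

lemma adj_of_starEdges_subset {w : V} {D : Set V} (h : starEdges w D ⊆ H.edgeSet) {z : V}
    (hz : z ∈ D) : H.Adj z w :=
  H.mem_edgeSet.1 (h ⟨z, hz, rfl⟩)

lemma dist_le_two_of_starEdges_subset {w : V} {D : Set V} (h : starEdges w D ⊆ H.edgeSet)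
    (hx : x ∈ D) (hy : y ∈ D) : H.dist x y ≤ 2 :=
  H.dist_le (.cons (adj_of_starEdges_subset h hx) (.cons (adj_of_starEdges_subset h hy).symm .nil))

lemma dist_le_five_of_bridged_stars {w₁ w₂ : V} {D₁ D₂ : Set V}
    (h₁ : starEdges w₁ D₁ ⊆ H.edgeSet) (h₂ : starEdges w₂ D₂ ⊆ H.edgeSet)
    (hbridge : (∃ u ∈ D₁, ∃ v ∈ D₂, G.Adj u v) → ∃ u ∈ D₁, ∃ v ∈ D₂, H.Adj u v)
    (hx : x ∈ D₁ ∪ D₂) (hy : y ∈ D₁ ∪ D₂) (hxy : G.Adj x y) : H.dist x y ≤ 5 := by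
  have across : ∀ {a b}, a ∈ D₁ → b ∈ D₂ → G.Adj a b → H.dist a b ≤ 5 := by
    intro a b ha hb hab
    obtain ⟨u, hu, v, hv, huv⟩ := hbridge ⟨a, ha, b, hb, hab⟩
    exact H.dist_le (.cons (adj_of_starEdges_subset h₁ ha)
      (.cons (adj_of_starEdges_subset h₁ hu).symm (.cons huv
        (.cons (adj_of_starEdges_subset h₂ hv) (.cons (adj_of_starEdges_subset h₂ hb).symm .nil)))))
  rcases hx with hx | hx <;> rcases hy with hy | hy
  · exact (dist_le_two_of_starEdges_subset h₁ hx hy).trans (by norm_num)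
  · exact across hx hy hxy
  · exact dist_comm (G := H) ▸ across hy hx hxy.symm
  · exact (dist_le_two_of_starEdges_subset h₂ hx hy).trans (by norm_num)

lemma dist_le_four_of_linked_stars {w₁ w₂ u : V} {D₁ D₂ : Set V}
    (h₁ : starEdges w₁ D₁ ⊆ H.edgeSet) (h₂ : starEdges w₂ D₂ ⊆ H.edgeSet) (hu : u ∈ D₁)
    (huw : H.Adj u w₂) (hx : x ∈ D₁ ∪ D₂) (hy : y ∈ D₁ ∪ D₂) : H.dist x y ≤ 4 := by
  have across : ∀ {a b}, a ∈ D₁ → b ∈ D₂ → H.dist a b ≤ 4 := fun ha hb =>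
    H.dist_le (.cons (adj_of_starEdges_subset h₁ ha) (.cons (adj_of_starEdges_subset h₁ hu).symm
      (.cons huw (.cons (adj_of_starEdges_subset h₂ hb).symm .nil))))
  rcases hx with hx | hx <;> rcases hy with hy | hy
  · exact (dist_le_two_of_starEdges_subset h₁ hx hy).trans (by norm_num)
  · exact across hx hy
  · exact dist_comm (G := H) ▸ across hy hx
  · exact (dist_le_two_of_starEdges_subset h₂ hx hy).trans (by norm_num)

theorem ClusterEdges.dist_le_five {E : Set (Sym2 V)} (hE : ClusterEdges G S P E)
    (hEH : E ⊆ H.edgeSet) (hcover : ∀ z ∈ S, ∃ p ∈ P, G.Adj z p) (hx : x ∈ S) (hy : y ∈ S)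
    (hxy : G.Adj x y) : H.dist x y ≤ 5 := by
  rcases hE with ⟨-, w, -, rfl⟩ | ⟨C₁, C₂, hsplit, w₁, -, w₂, -, hcase⟩
  · exact (dist_le_two_of_starEdges_subset hEH hx hy).trans (by norm_num)
  have hx' := mem_Dset_union hsplit.1 hcover hx
  have hy' := mem_Dset_union hsplit.1 hcover hy
  rcases hcase with ⟨-, ⟨hnone, rfl⟩ | ⟨u, hu, v, hv, -, rfl⟩⟩ | ⟨-, u, hu, rfl⟩
  · exact dist_le_five_of_bridged_stars (Set.subset_union_left.trans hEH)
      (Set.subset_union_right.trans hEH) (absurd · hnone) hx' hy' hxy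
  · exact dist_le_five_of_bridged_stars
      (Set.subset_union_left.trans (Set.subset_union_left.trans hEH))
      (Set.subset_union_right.trans (Set.subset_union_left.trans hEH))
      (fun _ => ⟨u, hu, v, hv, H.mem_edgeSet.1 (hEH (Or.inr rfl))⟩) hx' hy' hxy
  · rw [← Set.union_sdiff_self] at hx' hy'
    exact (dist_le_four_of_linked_stars (Set.subset_union_left.trans (Set.subset_union_left.trans hEH))
      (Set.subset_union_right.trans (Set.subset_union_left.trans hEH)) hu.1
      (H.mem_edgeSet.1 (hEH (Or.inr rfl))) hx' hy').trans (by norm_num)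

end Rewiring

theorem stmt10_general {V : Type} (G : SimpleGraph V) (hG : G.Connected)
    (r : V) (H : SimpleGraph V) (hH : IsAlgoOutput G r H)
    (x y : V) (hxy : G.Adj x y) (hd : G.dist r x = G.dist r y) :
    H.dist x y ≤ 5 := by
  obtain ⟨f, hf, hHE⟩ := hH
  have hk : 1 ≤ G.dist r x := dist_pos_of_adj_of_dist_eq (hG.preconnected r x) hxy hd
  obtain ⟨S, hS, hxS, hyS⟩ := exists_isCluster_mem_of_adj hxy hd
  have hSH : f S ⊆ H.edgeSet := hHE ▸ Set.subset_biUnion_of_mem (u := f) ⟨_, hk, hS⟩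
  exact (hf S _ hk hS).dist_le_five hSH (hS.exists_adj_mem_parentSet hk) hxS hyS hxy

theorem stmt10 {V : Type} [Fintype V] (G : SimpleGraph V) (hG : G.Connected)
    (hfree : K23Free G) (r : V) (H : SimpleGraph V) (hH : IsAlgoOutput G r H)
    (x y : V) (hxy : G.Adj x y) (hd : G.dist r x = G.dist r y) :
    H.dist x y ≤ 5 :=
  stmt10_general G hG r H hH x y hxy hd

end Paper
end

section
/- Let G be a K_{2,3}-induced-minor-free graph, r a vertex, and H the output of the cluster-rewiring algorithm on (G, r). Then for every edge xy of H, dist_G(x,y) ≤ 4. -/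
/-!
Every edge of `H` either is an edge of `G`, or joins a vertex `v` of a cluster `S` to a chosen
vertex `w` of a connected part `C` of the parent set of `S`, where `v` has a `G`-neighbour
`c ∈ C`. So it suffices that any two vertices of `C` are at distance at most 3 in `G`.
Otherwise a shortest path inside `C` contains three pairwise nonadjacent vertices; these,
the ball below the parent level, and a connected set above it through their children in `S`
(which exists because `S` is connected outside that ball) form a `K_{2,3}` induced minor.
-/

open SimpleGraph

namespace SimpleGraph

variable {W : Type*} {G : SimpleGraph W} {r u v w : W}

lemma dist_le_dist_add_one_of_adj (h : G.Adj u v) : G.dist r u ≤ G.dist r v + 1 := by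
  rcases h.symm.diff_dist_adj (u := r) with h' | h' | h' <;> omega

lemma not_adj_of_dist_add_two_le (h : G.dist r u + 2 ≤ G.dist r v) : ¬ G.Adj u v := fun huv => by
  have := dist_le_dist_add_one_of_adj (r := r) huv.symm
  omega

lemma ne_and_not_adj_of_two_le_dist (h : 2 ≤ G.dist u v) : u ≠ v ∧ ¬ G.Adj u v := by
  refine ⟨?_, fun huv => ?_⟩
  · rintro rfl
    simp at h
  · rw [dist_eq_one_iff_adj.mpr huv] at h
    omega

lemma exists_adj_dist_eq_of_dist_eq_add_one {d : ℕ} (h : G.dist r v = d + 1) :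
    ∃ u, G.Adj u v ∧ G.dist r u = d := by
  obtain ⟨p, hp⟩ :=
    (Reachable.of_dist_ne_zero (by omega : G.dist r v ≠ 0)).exists_walk_length_eq_dist
  have hnil : ¬ p.Nil := by
    rw [← Walk.length_eq_zero_iff]
    omega
  refine ⟨p.penultimate, p.adj_penultimate hnil, le_antisymm ?_ ?_⟩
  · have := dist_le p.dropLast
    rw [Walk.length_dropLast] at this
    omega
  · have := dist_le_dist_add_one_of_adj (r := r) (p.adj_penultimate hnil).symm
    omega

lemma Reachable.exists_two_le_dist_of_four_le_dist (h : G.Reachable u w) (hd : 4 ≤ G.dist u w) :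
    ∃ v, 2 ≤ G.dist u v ∧ 2 ≤ G.dist v w := by
  obtain ⟨p, hp⟩ := h.exists_walk_length_eq_dist
  have htake := dist_le (p.take 2)
  have hdrop := dist_le (p.drop 2)
  rw [Walk.take_length] at htake
  rw [Walk.drop_length] at hdrop
  have := (p.take 2).reachable.dist_triangle_left w
  refine ⟨p.getVert 2, ?_, ?_⟩ <;> omega

lemma dist_eq_of_sym2_eq {x y : W} (h : s(u, v) = s(x, y)) : G.dist u v = G.dist x y := by
  rcases Sym2.eq_iff.mp h with ⟨rfl, rfl⟩ | ⟨rfl, rfl⟩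
  exacts [rfl, dist_comm]

lemma Connected.connected_induce_dist_lt (hG : G.Connected) (r : W) {n : ℕ} (hn : 0 < n) :
    (G.induce {x | G.dist r x < n}).Connected := by
  classical
  refine induce_connected_of_patches r (by simpa using hn) fun {v} hv => ?_
  obtain ⟨p, hp⟩ := hG.exists_walk_length_eq_dist r v
  refine ⟨{z | z ∈ p.support}, fun z hz => ?_, p.start_mem_support, p.end_mem_support,
    p.connected_induce_support.preconnected _ _⟩
  have := dist_le (p.takeUntil z hz)
  have := p.length_takeUntil_le_length hz
  simp only [Set.mem_ofPred_eq] at hv ⊢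
  omega

end SimpleGraph

namespace Paper

variable {V : Type} {G : SimpleGraph V}

lemma not_K23Free_of_attached_triple {A B : Set V} (hA : (G.induce A).Connected)
    (hB : (G.induce B).Connected) (hAB : Disjoint A B) (hnadj : ∀ a ∈ A, ∀ b ∈ B, ¬ G.Adj a b)
    {t : Fin 3 → V} (ht : Function.Injective t) (hind : Pairwise fun i j => ¬ G.Adj (t i) (t j))
    (htA : ∀ j, t j ∉ A ∧ ∃ a ∈ A, G.Adj (t j) a) (htB : ∀ j, t j ∉ B ∧ ∃ b ∈ B, G.Adj (t j) b) :
    ¬ K23Free G := by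
  refine not_not_intro ⟨Sum.elim ![A, B] fun j => {t j}, ?_, ?_, ?_, ?_⟩
  · rintro (i | j)
    · fin_cases i
      exacts [Set.nonempty_coe_sort.mp hA.nonempty, Set.nonempty_coe_sort.mp hB.nonempty]
    · exact Set.singleton_nonempty _
  · rintro (i | j)
    · fin_cases i
      exacts [hA, hB]
    · simp
  · rintro (i | j) (i' | j') hne
    · fin_cases i <;> fin_cases i' <;> simp_all [hAB.symm]
    · fin_cases i <;> simp [(htA j').1, (htB j').1]
    · fin_cases i' <;> simp [(htA j).1, (htB j).1]
    · simpa using ht.ne (fun h => hne (congrArg Sum.inr h))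
  · rintro (i | j) (i' | j') hne
    · fin_cases i <;> fin_cases i' <;> simp_all [completeBipartiteGraph]
      exact fun b hb a ha hba => hnadj a ha b hb hba.symm
    · obtain ⟨a, ha, hta⟩ := (htA j').2
      obtain ⟨b, hb, htb⟩ := (htB j').2
      fin_cases i <;> simp [completeBipartiteGraph]
      exacts [⟨a, ha, hta.symm⟩, ⟨b, hb, htb.symm⟩]
    · fin_cases i' <;> simp [completeBipartiteGraph, (htA j).2, (htB j).2]
    · simpa [completeBipartiteGraph] using hind (fun h => hne (congrArg Sum.inr h))

lemma ConnOutside.exists_connected {B : Set V} {u v : V} (h : ConnOutside G B u v) :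
    ∃ U ⊆ Bᶜ, u ∈ U ∧ v ∈ U ∧ (G.induce U).Connected := by
  obtain ⟨hu, hv, ⟨q⟩⟩ := h
  let p := q.map (Embedding.induce Bᶜ).toHom
  refine ⟨{z | z ∈ p.support}, fun z hz => ?_, p.start_mem_support, p.end_mem_support,
    p.connected_induce_support⟩
  obtain ⟨z', -, rfl⟩ := List.mem_map.mp (q.support_map _ ▸ hz)
  exact z'.2

lemma IsCluster.exists_connected_le_dist {r : V} {k : ℕ} {S : Set V} (hS : IsCluster G r k S)
    {s : Fin 3 → V} (hs : ∀ j, s j ∈ S) :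
    ∃ U, (G.induce U).Connected ∧ (∀ j, s j ∈ U) ∧ ∀ x ∈ U, k ≤ G.dist r x := by
  obtain ⟨U₁, hU₁, h₀₁, h₁, hc₁⟩ := (hS.2.2.1 _ (hs 0) _ (hs 1)).exists_connected
  obtain ⟨U₂, hU₂, h₀₂, h₂, hc₂⟩ := (hS.2.2.1 _ (hs 0) _ (hs 2)).exists_connected
  refine ⟨U₁ ∪ U₂, induce_union_connected hc₁.preconnected hc₂.preconnected ⟨s 0, h₀₁, h₀₂⟩,
    fun j => ?_, fun x hx => ?_⟩
  · fin_cases j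
    exacts [Or.inl h₀₁, Or.inl h₁, Or.inr h₂]
  · simpa using (Set.union_subset hU₁ hU₂) hx

lemma not_K23Free_of_parentSet_triple (hG : G.Connected) {r : V} {k : ℕ} {S : Set V}
    (hS : IsCluster G r k S) {t : Fin 3 → V} (ht : ∀ j, t j ∈ parentSet G r k S)
    (hinj : Function.Injective t) (hind : Pairwise fun i j => ¬ G.Adj (t i) (t j)) :
    ¬ K23Free G := by
  choose hlev s hsS hadj using ht
  have hk : 2 ≤ k := by
    by_contra! hk
    refine hinj.ne (show (0 : Fin 3) ≠ 1 by decide) ?_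
    exact (hG.dist_eq_zero_iff.mp (by rw [hlev 0]; omega)).symm.trans
      (hG.dist_eq_zero_iff.mp (by rw [hlev 1]; omega))
  -- Branch sets: the ball below level `k - 1` and a connected set at levels `≥ k` through the
  -- children of the triple; two levels apart, they are disjoint and anticomplete.
  obtain ⟨U, hU, hsU, hUlev⟩ := hS.exists_connected_le_dist hsS
  refine not_K23Free_of_attached_triple (hG.connected_induce_dist_lt r (n := k - 1) (by omega)) hU
    (Set.disjoint_left.mpr fun x hxA hxU => ?_) (fun a ha u hu => ?_) hinj hind (fun j => ?_)
    (fun j => ⟨fun hj => ?_, s j, hsU j, hadj j⟩)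
  · have := hUlev x hxU
    simp only [Set.mem_ofPred_eq] at hxA
    omega
  · have := hUlev u hu
    simp only [Set.mem_ofPred_eq] at ha
    exact not_adj_of_dist_add_two_le (r := r) (by omega)
  · obtain ⟨a, hat, ha⟩ :=
      exists_adj_dist_eq_of_dist_eq_add_one (d := k - 2) (by rw [hlev j]; omega)
    exact ⟨by simp [hlev j], a, by simp only [Set.mem_ofPred_eq]; omega, hat.symm⟩
  · have := hUlev _ hj
    have := hlev j
    omega

lemma dist_le_three_of_mem_parentSet (hG : G.Connected) (hfree : K23Free G) {r : V} {k : ℕ}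
    {S C : Set V} (hS : IsCluster G r k S) (hCP : C ⊆ parentSet G r k S)
    (hC : (G.induce C).Connected) {c w : V} (hc : c ∈ C) (hw : w ∈ C) : G.dist c w ≤ 3 := by
  have hreach := hC.preconnected ⟨c, hc⟩ ⟨w, hw⟩
  have hle : G.dist c w ≤ (G.induce C).dist ⟨c, hc⟩ ⟨w, hw⟩ := by
    obtain ⟨p, hp⟩ := hreach.exists_walk_length_eq_dist
    have := dist_le (p.map (Embedding.induce C).toHom)
    rwa [Walk.length_map, hp] at this
  by_contra! h4
  -- the vertex two steps along a shortest `c`-`w` path in `C` is far from both ends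
  obtain ⟨m, hcm, hmw⟩ := hreach.exists_two_le_dist_of_four_le_dist (by omega)
  let t : Fin 3 → C := ![⟨c, hc⟩, m, ⟨w, hw⟩]
  have hfar : Pairwise fun i j => 2 ≤ (G.induce C).dist (t i) (t j) := by
    intro i j hij
    fin_cases i <;> fin_cases j <;> simp [t] at hij ⊢ <;>
      first | omega | (rw [SimpleGraph.dist_comm]; omega)
  refine not_K23Free_of_parentSet_triple hG hS (t := fun j => (t j).1) (fun j => hCP (t j).2)
    (fun i j hij => ?_) (fun i j hij => (ne_and_not_adj_of_two_le_dist (hfar hij)).2) hfree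
  by_contra hne
  exact (ne_and_not_adj_of_two_le_dist (hfar hne)).1 (Subtype.ext hij)

lemma IsCluster.subset_Dset_parentSet {r : V} {k : ℕ} {S : Set V} (hS : IsCluster G r k S)
    (hk : 1 ≤ k) : S ⊆ Dset G S (parentSet G r k S) := fun v hv => by
  obtain ⟨c, hcv, hc⟩ :=
    exists_adj_dist_eq_of_dist_eq_add_one (d := k - 1) (by rw [hS.2.1 v hv]; omega)
  exact ⟨hv, c, ⟨hc, v, hv, hcv⟩, hcv.symm⟩

lemma dist_le_four_of_mem_starEdges (hG : G.Connected) (hfree : K23Free G) {r : V} {k : ℕ}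
    {S C D : Set V} (hS : IsCluster G r k S) (hCP : C ⊆ parentSet G r k S)
    (hC : (G.induce C).Connected) {w : V} (hw : w ∈ C) (hD : D ⊆ Dset G S C) {x y : V}
    (he : s(x, y) ∈ starEdges w D) : G.dist x y ≤ 4 := by
  obtain ⟨v, hv, he⟩ := he
  obtain ⟨-, c, hc, hvc⟩ := hD hv
  rw [dist_eq_of_sym2_eq he]
  calc G.dist v w ≤ G.dist v c + G.dist c w := hG.dist_triangle
    _ ≤ 1 + 3 := add_le_add (dist_eq_one_iff_adj.mpr hvc).le
      (dist_le_three_of_mem_parentSet hG hfree hS hCP hC hc hw)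

lemma ClusterEdges.dist_le_four (hG : G.Connected) (hfree : K23Free G) {r : V} {k : ℕ}
    {S : Set V} {E : Set (Sym2 V)} (hE : ClusterEdges G S (parentSet G r k S) E) (hk : 1 ≤ k)
    (hS : IsCluster G r k S) {x y : V} (he : s(x, y) ∈ E) : G.dist x y ≤ 4 := by
  rcases hE with ⟨hP, w, hw, rfl⟩ |
    ⟨C₁, C₂, ⟨hunion, -, -, -, hC₁, hC₂, -⟩, w₁, hw₁, w₂, hw₂, hcases⟩
  · exact dist_le_four_of_mem_starEdges hG hfree hS subset_rfl hP hw
      (hS.subset_Dset_parentSet hk) he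
  have star₁ : s(x, y) ∈ starEdges w₁ (Dset G S C₁) → G.dist x y ≤ 4 :=
    dist_le_four_of_mem_starEdges hG hfree hS (hunion ▸ Set.subset_union_left) hC₁ hw₁ subset_rfl
  have star₂ {D} (hD : D ⊆ Dset G S C₂) : s(x, y) ∈ starEdges w₂ D → G.dist x y ≤ 4 :=
    dist_le_four_of_mem_starEdges hG hfree hS (hunion ▸ Set.subset_union_right) hC₂ hw₂ hD
  rcases hcases with ⟨-, ⟨-, rfl⟩ | ⟨u, -, v, -, huv, rfl⟩⟩ | ⟨-, u, hu, rfl⟩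
  · rcases he with he | he
    exacts [star₁ he, star₂ subset_rfl he]
  · rcases he with (he | he) | he
    exacts [star₁ he, star₂ subset_rfl he,
      (dist_eq_of_sym2_eq he).trans_le ((dist_eq_one_iff_adj.mpr huv).trans_le (by norm_num))]
  · rcases he with (he | he) | he
    exacts [star₁ he, star₂ Set.sdiff_subset he, star₂ subset_rfl ⟨u, hu.2, he⟩]

theorem stmt12_general {V : Type} (G : SimpleGraph V) (hG : G.Connected)
    (hfree : K23Free G) (r : V) (H : SimpleGraph V) (hH : IsAlgoOutput G r H)
    (x y : V) (hxy : H.Adj x y) :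
    G.dist x y ≤ 4 := by
  obtain ⟨f, hf, hE⟩ := hH
  have he : s(x, y) ∈ H.edgeSet := hxy
  rw [hE, Set.mem_iUnion₂] at he
  obtain ⟨S, ⟨k, hk, hS⟩, he⟩ := he
  exact (hf S k hk hS).dist_le_four hG hfree hk hS he

theorem stmt12 {V : Type} [Fintype V] (G : SimpleGraph V) (hG : G.Connected)
    (hfree : K23Free G) (r : V) (H : SimpleGraph V) (hH : IsAlgoOutput G r H)
    (x y : V) (hxy : H.Adj x y) :
    G.dist x y ≤ 4 :=
  stmt12_general G hG hfree r H hH x y hxy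

end Paper
end
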